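/- Every prime that is antipalindromic in base 3 has an odd number of base-3 digits, and this number of digits is at least 3. -/
import Mathlib


/-- `m` is antipalindromic in base `b`: its base-`b` digits `a_0, ..., a_n`
(little-endian, `a_n ≠ 0` automatic from `Nat.digits`) satisfy
`a_j = b - 1 - a_{n-j}` for all `j`. -/
def Antipal (b m : ℕ) : Prop :=
  ∀ i < (Nat.digits b m).length,
    (Nat.digits b m).getD i 0 =
      b - 1 - (Nat.digits b m).getD ((Nat.digits b m).length - 1 - i) 0

lemma list_sum_eq_sum_getD (l : List ℕ) :
    l.sum = ∑ i ∈ Finset.range l.length, l.getD i 0 := by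
  induction l with
  | nil => simp
  | cons a t ih =>
      rw [List.sum_cons, List.length_cons, Finset.sum_range_succ']
      simp [ih, add_comm]

theorem stmt_8 (p : ℕ) (hp : p.Prime) (ha : Antipal 3 p) :
    Odd (Nat.digits 3 p).length ∧ 3 ≤ (Nat.digits 3 p).length := by
  set l := Nat.digits 3 p with hl
  set L := l.length with hLdef
  have hp0 : p ≠ 0 := hp.pos.ne'
  have hL0 : L ≠ 0 := by
    simp only [hLdef, hl]
    exact fun h => hp0 (Nat.digits_eq_nil_iff_eq_zero.mp (List.length_eq_zero_iff.mp h))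
  have hle : ∀ i, l.getD i 0 ≤ 2 := by
    intro i
    rcases lt_or_ge i l.length with h | h
    · rw [List.getD_eq_getElem l 0 h]
      have := Nat.digits_lt_base (by norm_num) (List.getElem_mem h)
      omega
    · rw [List.getD_eq_default l 0 h]
      omega
  -- sum of digits equals L
  have hsum : l.sum = L := by
    have h2 : (2 : ℕ) * l.sum = 2 * L := by
      have hrefl : ∑ i ∈ Finset.range L, l.getD (L - 1 - i) 0
          = ∑ i ∈ Finset.range L, l.getD i 0 :=
        Finset.sum_range_reflect (fun i => l.getD i 0) L
      have : ∑ i ∈ Finset.range L, (l.getD i 0 + l.getD (L - 1 - i) 0)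
          = ∑ i ∈ Finset.range L, 2 := by
        apply Finset.sum_congr rfl
        intro i hi
        have hi' := Finset.mem_range.mp hi
        have := ha i hi'
        have h1 := hle (L - 1 - i)
        rw [← hl, ← hLdef] at this
        omega
      rw [Finset.sum_add_distrib, hrefl] at this
      simp only [Finset.sum_const, Finset.card_range, smul_eq_mul] at this
      rw [list_sum_eq_sum_getD, ← hLdef]
      omega
    omega
  -- p ≡ l.sum [MOD 2]
  have hmod : p % 2 = l.sum % 2 := by
    have := Nat.ofDigits_modEq 3 2 l
    rw [hl, Nat.ofDigits_digits] at this
    simpa [Nat.ofDigits_one, Nat.ModEq] using this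
  -- p is odd: p ≠ 2 since digits of 2 are [2] and antipal fails
  have hp2 : p ≠ 2 := by
    intro h
    have := ha 0 (by subst h; simp [hl])
    subst h
    simp [hl] at this
  have hodd : p % 2 = 1 := Nat.odd_iff.mp (hp.odd_of_ne_two hp2)
  have hLodd : L % 2 = 1 := by omega
  have hL1 : L ≠ 1 := by
    intro h
    obtain ⟨a, hla⟩ := List.length_eq_one_iff.mp (hLdef ▸ h)
    have hpa : p = a := by
      have := Nat.ofDigits_digits 3 p
      rw [← hl, hla, Nat.ofDigits_singleton] at this
      exact this.symm
    have h0 := ha 0 (by rw [← hl, ← hLdef, h]; omega)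
    have hle0 := hle 0
    simp only [← hl, ← hLdef, h, hla] at h0 hle0
    simp only [List.getD_cons_zero] at h0 hle0
    have : a = 1 := by omega
    exact hp.one_lt.ne' (by omega)
  refine ⟨Nat.odd_iff.mpr hLodd, by omega⟩
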